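/- arXiv:math/0108009 — 3 statements merged into one kernel-verified Lean document; each statement's English description precedes it below -/
import Mathlib

section
/- With the generic sequence (δ_i, σ_i), i = 0,…,p and the inductively defined sequence (i_k, r_k), k = 0,…,m as above, if moreover σ_{i_m} = 0, then letting ψ(x) = min_{0 ≤ i ≤ p} (δ_i + σ_i x), one has Σ_{k=0}^{m-1} (δ_{i_{k+1}} − δ_{i_k})(σ_{i_k} + σ_{i_{k+1}} − 1) = ∫_0^∞ ψ'(x)(ψ'(x) − 1) dx, where ψ' is the (almost everywhere defined) derivative of the piecewise linear function ψ. -/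
/-!
On `(r k, r (k+1))` the line `i k` lies strictly below all others at rational points, hence
everywhere by continuity, so there `ψ` is that line and `ψ' = σ (i k)` almost everywhere; beyond
`r m` likewise `ψ' = σ (i m) = 0`. The integral is therefore `∑ (r (k+1) - r k) c k` with
`c k = σ (i k) (σ (i k) - 1)`. Since `δ (i (k+1)) - δ (i k) = (σ (i k) - σ (i (k+1))) r (k+1)`,
the `k`-th breakpoint term is `r (k+1) (c k - c (k+1))`, and Abel summation with `r 0 = 0` and
`c m = 0` identifies the two sums.
-/

open MeasureTheory Set

theorem le_of_forall_rat_mem {f g : ℝ → ℝ} (hf : Continuous f) (hg : Continuous g)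
    {s : Set ℝ} (hs : IsOpen s) (h : ∀ q : ℚ, (q : ℝ) ∈ s → f q ≤ g q) {x : ℝ} (hx : x ∈ s) :
    f x ≤ g x := by
  refine closure_minimal ?_ (isClosed_le hf hg)
    (Rat.denseRange_cast.open_subset_closure_inter hs hx)
  rintro _ ⟨hq, q, rfl⟩
  exact h q hq

theorem eqOn_iInf_lines_of_forall_rat_lt {ι : Type*} {δ σ : ι → ℚ} {s : Set ℝ} (hs : IsOpen s)
    {j₀ : ι} (hmin : ∀ q : ℚ, (q : ℝ) ∈ s → ∀ j ≠ j₀, δ j₀ + σ j₀ * q < δ j + σ j * q) :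
    EqOn (fun x : ℝ => ⨅ j, (δ j : ℝ) + σ j * x) (fun x => δ j₀ + σ j₀ * x) s := by
  intro x hx
  refine IsLeast.csInf_eq ⟨⟨j₀, rfl⟩, forall_mem_range.2 fun j => ?_⟩
  obtain rfl | hj := eq_or_ne j j₀
  · exact le_rfl
  refine le_of_forall_rat_mem (f := fun y : ℝ => δ j₀ + σ j₀ * y)
    (g := fun y : ℝ => δ j + σ j * y) (by fun_prop) (by fun_prop) hs (fun q hq => ?_) hx
  exact_mod_cast (hmin q hq j hj).le

theorem HasDerivAt.eq_of_eqOn_affine {ψ : ℝ → ℝ} {s : Set ℝ} (hs : IsOpen s) {a b d x : ℝ}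
    (heq : EqOn ψ (fun y => a + b * y) s) (hx : x ∈ s) (hψ : HasDerivAt ψ d x) : d = b := by
  have hline : HasDerivAt (fun y => a + b * y) b x := by
    simpa using ((hasDerivAt_id x).const_mul b).const_add a
  exact hψ.unique (hline.congr_of_eventuallyEq (Filter.eventuallyEq_of_mem (hs.mem_nhds hx) heq))

theorem ae_deriv_eq_of_eqOn_iInf_lines {ι : Type*} {δ σ : ι → ℚ} {ψ ψ' : ℝ → ℝ}
    (hψ : ∀ x, ψ x = ⨅ j, (δ j : ℝ) + σ j * x) {s : Set ℝ} (hs : IsOpen s) {j₀ : ι}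
    (hmin : ∀ q : ℚ, (q : ℝ) ∈ s → ∀ j ≠ j₀, δ j₀ + σ j₀ * q < δ j + σ j * q)
    (hd : ∀ᵐ x, x ∈ s → HasDerivAt ψ (ψ' x) x) :
    ∀ᵐ x, x ∈ s → ψ' x = σ j₀ := by
  filter_upwards [hd] with x hx hxs
  exact (hx hxs).eq_of_eqOn_affine hs
    (fun y hy => (hψ y).trans (eqOn_iInf_lines_of_forall_rat_lt hs hmin hy)) hxs

theorem integral_Ioi_eq_sum_of_ae_piecewise_const {g : ℝ → ℝ} {r c : ℕ → ℝ} {m : ℕ}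
    (hr : ∀ k < m, r k ≤ r (k + 1))
    (hpiece : ∀ k < m, ∀ᵐ x, x ∈ Ioo (r k) (r (k + 1)) → g x = c k)
    (htail : ∀ᵐ x, r m < x → g x = 0) :
    ∫ x in Ioi (r 0), g x = ∑ k ∈ Finset.range m, (r (k + 1) - r k) * c k := by
  have hpiece' : ∀ k < m, g =ᵐ[volume.restrict (Ioc (r k) (r (k + 1)))] fun _ => c k := by
    intro k hk
    rw [← restrict_Ioo_eq_restrict_Ioc]
    filter_upwards [ae_restrict_mem measurableSet_Ioo, ae_restrict_of_ae (hpiece k hk)]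
      with x hx h
    exact h hx
  have hint : ∀ k < m, IntervalIntegrable g volume (r k) (r (k + 1)) := by
    intro k hk
    rw [intervalIntegrable_iff_integrableOn_Ioc_of_le (hr k hk)]
    exact (integrableOn_const (by simp)).congr_fun_ae (hpiece' k hk).symm
  have htail' : g =ᵐ[volume.restrict (Ioi (r m))] fun _ => 0 := by
    filter_upwards [ae_restrict_mem measurableSet_Ioi, ae_restrict_of_ae htail] with x hx h
    exact h hx
  rw [← intervalIntegral.integral_interval_add_Ioi' (IntervalIntegrable.trans_iterate hint)
      (integrableOn_zero.congr_fun_ae htail'.symm),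
    ← intervalIntegral.sum_integral_adjacent_intervals hint, integral_congr_ae htail',
    integral_zero, add_zero]
  refine Finset.sum_congr rfl fun k hk => ?_
  have hrk := hr k (Finset.mem_range.1 hk)
  rw [intervalIntegral.integral_of_le hrk, integral_congr_ae (hpiece' k (Finset.mem_range.1 hk)),
    setIntegral_const, Real.volume_real_Ioc_of_le hrk, smul_eq_mul]

theorem sum_breakpoints_eq_sum_pieces (m : ℕ) (d s r : ℕ → ℝ)
    (hbreak : ∀ k < m, d k + s k * r (k + 1) = d (k + 1) + s (k + 1) * r (k + 1))
    (hr0 : r 0 = 0) (hsm : s m = 0) :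
    ∑ k ∈ Finset.range m, (-d k + d (k + 1)) * (s k + s (k + 1) - 1)
      = ∑ k ∈ Finset.range m, (r (k + 1) - r k) * (s k * (s k - 1)) := by
  set F : ℕ → ℝ := fun k => r k * (s k * (s k - 1))
  have hterm : ∀ k ∈ Finset.range m, (-d k + d (k + 1)) * (s k + s (k + 1) - 1)
      = (r (k + 1) - r k) * (s k * (s k - 1)) + (F k - F (k + 1)) := fun k hk => by
    linear_combination (1 - s k - s (k + 1)) * hbreak k (Finset.mem_range.1 hk)
  rw [Finset.sum_congr rfl hterm, Finset.sum_add_distrib, Finset.sum_range_sub']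
  simp [F, hr0, hsm]

theorem envelope_sum_eq_integral_general
    (p m : ℕ) (δ σ : Fin (p + 1) → ℚ)
    (i : ℕ → Fin (p + 1)) (r : ℕ → ℚ)
    (hr0 : r 0 = 0)
    (hrmono : ∀ k < m, r k < r (k + 1))
    (heq : ∀ k < m,
      δ (i k) + σ (i k) * r (k + 1) = δ (i (k + 1)) + σ (i (k + 1)) * r (k + 1))
    (hstrict : ∀ k < m, ∀ x : ℚ, r k < x → x < r (k + 1) →
      ∀ j, j ≠ i k → δ (i k) + σ (i k) * x < δ j + σ j * x)
    (hstop : ∀ x : ℚ, r m < x → ∀ j, j ≠ i m → δ (i m) + σ (i m) * x < δ j + σ j * x)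
    (hσm : σ (i m) = 0)
    (ψ ψ' : ℝ → ℝ)
    (hψ : ∀ x : ℝ, ψ x = ⨅ j : Fin (p + 1), ((δ j : ℝ) + (σ j : ℝ) * x))
    (hd : ∀ x : ℝ, 0 < x → (∀ k ≤ m, x ≠ (r k : ℝ)) → HasDerivAt ψ (ψ' x) x) :
    ∑ k ∈ Finset.range m,
        (-(δ (i k) : ℝ) + (δ (i (k + 1)) : ℝ)) * ((σ (i k) : ℝ) + (σ (i (k + 1)) : ℝ) - 1)
      = ∫ x in Ioi (0 : ℝ), ψ' x * (ψ' x - 1) := by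
  have hr_nonneg : ∀ k ≤ m, (0 : ℝ) ≤ r k := by
    intro k hk
    induction k with
    | zero => simp [hr0]
    | succ k ih => exact (ih (by omega)).trans (by exact_mod_cast (hrmono k (by omega)).le)
  have hd_on : ∀ s ⊆ Ioi (0 : ℝ), ∀ᵐ x, x ∈ s → HasDerivAt ψ (ψ' x) x := fun s hs0 => by
    filter_upwards [ae_all_iff.2 fun k => volume.ae_ne (r k : ℝ)] with x hx hxs
    exact hd x (hs0 hxs) fun k _ => hx k
  have hpiece : ∀ k < m, ∀ᵐ x, x ∈ Ioo (r k : ℝ) (r (k + 1)) →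
      ψ' x * (ψ' x - 1) = σ (i k) * (σ (i k) - 1) := fun k hk => by
    filter_upwards [ae_deriv_eq_of_eqOn_iInf_lines hψ isOpen_Ioo
      (fun q hq => hstrict k hk q (Rat.cast_lt.1 hq.1) (Rat.cast_lt.1 hq.2))
      (hd_on _ fun x hx => (hr_nonneg k hk.le).trans_lt hx.1)] with x hx hxs
    rw [hx hxs]
  have htail : ∀ᵐ x, (r m : ℝ) < x → ψ' x * (ψ' x - 1) = 0 := by
    filter_upwards [ae_deriv_eq_of_eqOn_iInf_lines hψ isOpen_Ioi
      (fun q hq => hstop q (Rat.cast_lt.1 (mem_Ioi.1 hq)))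
      (hd_on _ fun x hx => (hr_nonneg m le_rfl).trans_lt hx)] with x hx hxs
    simp [hx hxs, hσm]
  have hintegral := integral_Ioi_eq_sum_of_ae_piecewise_const (r := fun k => (r k : ℝ))
    (fun k hk => by exact_mod_cast (hrmono k hk).le) hpiece htail
  simp only [hr0, Rat.cast_zero] at hintegral
  rw [hintegral, sum_breakpoints_eq_sum_pieces m (fun k => δ (i k)) (fun k => σ (i k))
    (fun k => r k) (fun k hk => by exact_mod_cast heq k hk) (by simp [hr0]) (by simp [hσm])]

/-- With `σ (i m) = 0`, the breakpoint sum equals the integral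
`∫_0^∞ ψ'(x)(ψ'(x) - 1) dx`, where `ψ` is the lower envelope of the lines and `ψ'`
its a.e. derivative. -/
theorem envelope_sum_eq_integral
    (p m : ℕ) (δ σ : Fin (p + 1) → ℚ)
    (hδ0 : δ 0 = 0) (hδnn : ∀ i, 0 ≤ δ i) (hσnn : ∀ i, 0 ≤ σ i)
    (hδinj : Function.Injective δ)
    (hgen : ∀ i j l : Fin (p + 1), i ≠ j → j ≠ l → i ≠ l →
      ∀ x : ℚ, δ i + σ i * x = δ j + σ j * x → δ j + σ j * x ≠ δ l + σ l * x)
    (i : ℕ → Fin (p + 1)) (r : ℕ → ℚ)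
    (hi0 : i 0 = 0) (hr0 : r 0 = 0)
    (hrmono : ∀ k < m, r k < r (k + 1))
    (hne : ∀ k < m, i (k + 1) ≠ i k)
    (heq : ∀ k < m,
      δ (i k) + σ (i k) * r (k + 1) = δ (i (k + 1)) + σ (i (k + 1)) * r (k + 1))
    (hmin : ∀ k < m, ∀ j, δ (i k) + σ (i k) * r (k + 1) ≤ δ j + σ j * r (k + 1))
    (hstrict : ∀ k < m, ∀ x : ℚ, r k < x → x < r (k + 1) →
      ∀ j, j ≠ i k → δ (i k) + σ (i k) * x < δ j + σ j * x)
    (hstop : ∀ x : ℚ, r m < x → ∀ j, j ≠ i m → δ (i m) + σ (i m) * x < δ j + σ j * x)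
    (hσm : σ (i m) = 0)
    (ψ ψ' : ℝ → ℝ)
    (hψ : ∀ x : ℝ, ψ x = ⨅ j : Fin (p + 1), ((δ j : ℝ) + (σ j : ℝ) * x))
    (hd : ∀ x : ℝ, 0 < x → (∀ k ≤ m, x ≠ (r k : ℝ)) → HasDerivAt ψ (ψ' x) x) :
    ∑ k ∈ Finset.range m,
        (-(δ (i k) : ℝ) + (δ (i (k + 1)) : ℝ)) * ((σ (i k) : ℝ) + (σ (i (k + 1)) : ℝ) - 1)
      = ∫ x in Ioi (0 : ℝ), ψ' x * (ψ' x - 1) :=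
  envelope_sum_eq_integral_general p m δ σ i r hr0 hrmono heq hstrict hstop hσm ψ ψ' hψ hd
end

section
/- Suppose the homogeneous polynomial F of degree d satisfies XF = κF for the vector field X = Σ λ_i Z_i ∂/∂Z_i (i.e. F is an eigenvector of X), and the hypersurface {F = 0} is a normal variety. Then for each coordinate index i ∈ {0,…,n}, the minimum over all monomials Z^{α^j} of F of the exponent α^j_i satisfies min_j α^j_i ∈ {0, 1}; consequently the function φ_i(x) := −κ + (min_j α^j_i) x has φ_i'(x)(φ_i'(x) − 1) = 0 for all x. -/
/-!
If the homogeneous coordinate ring `ℂ[Z] ⧸ (F)` is a domain then `F` is prime, hence squarefree.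
If every monomial of `F` had `Z_i`-exponent at least `2`, then `Z_i ^ 2` would divide `F`,
so the minimal exponent is `0` or `1`.
-/

open MvPolynomial

namespace MvPolynomial

variable {σ R : Type*}

theorem X_pow_dvd_of_le_of_mem_support [CommSemiring R] {p : MvPolynomial σ R} {i : σ} {k : ℕ}
    (h : ∀ s ∈ p.support, k ≤ s i) : X i ^ k ∣ p := by
  rw [X_pow_eq_monomial, monomial_one_dvd_iff_modMonomial_eq_zero]
  ext s
  by_cases hs : Finsupp.single i k ≤ s
  · rw [coeff_modMonomial_of_le _ hs, coeff_zero]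
  · rw [coeff_modMonomial_of_not_le _ hs, coeff_zero, ← notMem_support_iff]
    exact fun hmem => hs (Finsupp.single_le_iff.mpr (h s hmem))

theorem inf'_support_apply_le_one_of_squarefree [CommRing R] [IsDomain R]
    {p : MvPolynomial σ R} (hp : Squarefree p) (hne : p.support.Nonempty) (i : σ) :
    p.support.inf' hne (fun s => s i) ≤ 1 := by
  by_contra hgt
  have hdvd : X i * X i ∣ p := by
    rw [← sq]
    exact X_pow_dvd_of_le_of_mem_support fun s hs =>
      (not_le.mp hgt).trans_le (Finset.inf'_le _ hs)
  exact X_prime.not_isUnit (hp _ hdvd)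

end MvPolynomial

theorem normal_variety_min_exponent_general
    (n : ℕ) (F : MvPolynomial (Fin (n + 1)) ℂ) (hF : F ≠ 0)
    (hdom : IsDomain (MvPolynomial (Fin (n + 1)) ℂ ⧸ Ideal.span {F})) :
    ∀ i : Fin (n + 1),
      ((F.support.inf' (MvPolynomial.support_nonempty.mpr hF) fun s => s i) = 0 ∨ (F.support.inf' (MvPolynomial.support_nonempty.mpr hF) fun s => s i) = 1) ∧
      ((F.support.inf' (MvPolynomial.support_nonempty.mpr hF) fun s => s i : ℝ) * ((F.support.inf' (MvPolynomial.support_nonempty.mpr hF) fun s => s i : ℝ) - 1) = 0) := by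
  intro i
  have hprime : Prime F := by
    rwa [← Ideal.span_singleton_prime hF, ← Ideal.Quotient.isDomain_iff_prime]
  set m := F.support.inf' (support_nonempty.mpr hF) fun s => s i
  have hm : m = 0 ∨ m = 1 := by
    have hle := inf'_support_apply_le_one_of_squarefree hprime.irreducible.squarefree
      (support_nonempty.mpr hF) i
    omega
  have hcast : (F.support.inf' (support_nonempty.mpr hF) fun s => (s i : ℝ)) = m :=
    (Finset.apply_inf'_eq_inf'_comp _ _ Nat.cast_min).symm
  rw [hcast]
  rcases hm with h | h <;> simp [h]

/-- if the homogeneous polynomial `F` of degree `d` is an eigenvector of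
`X = Σ λ_k Z_k ∂/∂Z_k` (every monomial `Z^{α^j}` of `F` satisfies `Σ_k λ_k α^j_k = κ`)
and the hypersurface `{F = 0}` is normal (encoded: its homogeneous coordinate ring is an
integrally closed domain), then for every coordinate `i` the minimal exponent
`m_i = min_j α^j_i` is `0` or `1`; consequently the slope `m_i` of
`φ_i(x) = -κ + m_i x` satisfies `φ_i'(φ_i' - 1) = 0`. -/
theorem normal_variety_min_exponent
    (n d : ℕ) (F : MvPolynomial (Fin (n + 1)) ℂ) (hF : F ≠ 0)
    (hhom : F.IsHomogeneous d)
    (lam : Fin (n + 1) → ℤ) (κ : ℤ) (hlam : ∑ k, lam k = 0)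
    (heig : ∀ s ∈ F.support, ∑ k, lam k * (s k : ℤ) = κ)
    (hdom : IsDomain (MvPolynomial (Fin (n + 1)) ℂ ⧸ Ideal.span {F}))
    (hnormal : IsIntegrallyClosed (MvPolynomial (Fin (n + 1)) ℂ ⧸ Ideal.span {F})) :
    ∀ i : Fin (n + 1),
      ((F.support.inf' (MvPolynomial.support_nonempty.mpr hF) fun s => s i) = 0 ∨ (F.support.inf' (MvPolynomial.support_nonempty.mpr hF) fun s => s i) = 1) ∧
      ((F.support.inf' (MvPolynomial.support_nonempty.mpr hF) fun s => s i : ℝ) * ((F.support.inf' (MvPolynomial.support_nonempty.mpr hF) fun s => s i : ℝ) - 1) = 0) :=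
  normal_variety_min_exponent_general n F hF hdom
end

section
/- Let σ₁ satisfy σ < σ₁ < (1/d)·min_{i≥1} δ_i, and consider a point [Z_0,…,Z_n] ∈ ℂℙ^n with |Z_k| > ½|Z_j| for all j (i.e. in the chart U_k) satisfying F_t = 0, where F_t = t^δ Σ_{i=0}^p a_i t^{δ_i} Z^{α^i} with δ_0 = 0, a_0 = 1. If |Z_l / Z_k| ≥ |t|^{σ₁} for every l ≠ k with α^0_l > 0, then |Z^{α^0}| ≥ |t|^{σ₁ d} |Z_k|^d, while the equation F_t = 0 forces |Z^{α^0}| ≤ 2^d Σ_{i=1}^p |a_i| · |t|^{min_{i≥1} δ_i} |Z_k|^d; hence for |t| small enough there exists l ≠ k with |Z_l/Z_k| < |t|^{σ₁}. -/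
open Finset

/-!
On `F_t = 0` the leading monomial equals minus the sum of the other terms. On the chart `U_k`
every coordinate is at most `2 |Z_k|`, so each other term is at most `|a_i| |t|^{δ_min} (2|Z_k|)^d`.
If no coordinate were `|t|^{σ₁}`-small relative to `Z_k`, the leading monomial would be at least
`|t|^{σ₁ d} |Z_k|^d`; since `σ₁ d < δ_min`, the two bounds are incompatible once `t` is small.
-/

section Monomial

variable {𝕜 ι : Type*} [NormedField 𝕜] [Fintype ι]

theorem norm_prod_pow_le_of_norm_le (Z : ι → 𝕜) (α : ι → ℕ) {R : ℝ} (hZ : ∀ j, ‖Z j‖ ≤ R) :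
    ‖∏ j, Z j ^ α j‖ ≤ R ^ ∑ j, α j := by
  rw [norm_prod, ← prod_pow_eq_pow_sum]
  refine prod_le_prod (fun j _ => norm_nonneg _) fun j _ => ?_
  rw [norm_pow]
  exact pow_le_pow_left₀ (norm_nonneg _) (hZ j) _

theorem pow_sum_le_norm_prod_pow (Z : ι → 𝕜) (α : ι → ℕ) {r : ℝ} (hr : 0 ≤ r)
    (hZ : ∀ j, 0 < α j → r ≤ ‖Z j‖) :
    r ^ ∑ j, α j ≤ ‖∏ j, Z j ^ α j‖ := by
  rw [norm_prod, ← prod_pow_eq_pow_sum]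
  refine prod_le_prod (fun j _ => pow_nonneg hr _) fun j _ => ?_
  rw [norm_pow]
  rcases (α j).eq_zero_or_pos with h | h
  · simp [h]
  · exact pow_le_pow_left₀ hr (hZ j h) _

end Monomial

theorem norm_le_sum_erase_norm_of_sum_eq_zero {κ E : Type*} [SeminormedAddCommGroup E]
    [DecidableEq κ] {s : Finset κ} {c : κ → E} {i : κ} (hi : i ∈ s) (hc : ∑ j ∈ s, c j = 0) :
    ‖c i‖ ≤ ∑ j ∈ s.erase i, ‖c j‖ := by
  rw [← add_sum_erase s c hi, add_eq_zero_iff_eq_neg] at hc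
  rw [hc, norm_neg]
  exact norm_sum_le _ _

theorem norm_leading_monomial_le {κ ι : Type*} [Fintype κ] [DecidableEq κ] [Fintype ι]
    (a : κ → ℂ) (δ : κ → ℝ) (α : κ → ι → ℕ) {i₀ : κ} (ha₀ : a i₀ = 1) (hδ₀ : δ i₀ = 0)
    {d : ℕ} (hdeg : ∀ i, ∑ j, α i j = d) {δmin : ℝ} (hδmin : ∀ i, i ≠ i₀ → δmin ≤ δ i)
    {t : ℝ} (ht : 0 < t) (ht1 : t ≤ 1) {Z : ι → ℂ} {R : ℝ} (hZ : ∀ j, ‖Z j‖ ≤ R)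
    (hF : ∑ i, a i * ((t ^ δ i : ℝ) : ℂ) * ∏ j, Z j ^ α i j = 0) :
    ‖∏ j, Z j ^ α i₀ j‖ ≤ (∑ i ∈ univ.erase i₀, ‖a i‖) * t ^ δmin * R ^ d := by
  have hlead := norm_le_sum_erase_norm_of_sum_eq_zero (mem_univ i₀) hF
  rw [ha₀, hδ₀, Real.rpow_zero, Complex.ofReal_one, one_mul, one_mul] at hlead
  refine hlead.trans ?_
  rw [sum_mul, sum_mul]
  refine sum_le_sum fun i hi => ?_
  rw [norm_mul, norm_mul, Complex.norm_real, Real.norm_of_nonneg (Real.rpow_nonneg ht.le _),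
    mul_assoc, mul_assoc]
  refine mul_le_mul_of_nonneg_left
    (mul_le_mul ?_ ?_ (norm_nonneg _) (by positivity)) (norm_nonneg _)
  · exact Real.rpow_le_rpow_of_exponent_ge ht ht1 (hδmin i (ne_of_mem_erase hi))
  · exact hdeg i ▸ norm_prod_pow_le_of_norm_le _ _ hZ

theorem exists_pos_forall_mul_rpow_lt_one (C : ℝ) {e : ℝ} (he : 0 < e) :
    ∃ ε > 0, ∀ t : ℝ, 0 < t → t < ε → C * t ^ e < 1 := by
  have hlim : Filter.Tendsto (fun t : ℝ => C * t ^ e) (nhds 0) (nhds 0) := by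
    simpa [Real.zero_rpow he.ne'] using
      ((Real.continuousAt_rpow_const 0 e (Or.inr he.le)).tendsto.const_mul C)
  obtain ⟨ε, hε, hsmall⟩ := Metric.eventually_nhds_iff.mp (hlim.eventually (gt_mem_nhds one_pos))
  refine ⟨ε, hε, fun t ht htε => hsmall ?_⟩
  rwa [Real.dist_0_eq_abs, abs_of_pos ht]

theorem mul_rpow_mul_lt_rpow_mul {C t a b x : ℝ} (ht : 0 < t) (hx : 0 < x)
    (hC : C * t ^ (b - a) < 1) : C * t ^ b * x < t ^ a * x := by
  rw [← sub_add_cancel b a, Real.rpow_add ht, ← mul_assoc, mul_assoc]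
  exact (mul_lt_iff_lt_one_left (by positivity)).mpr hC

theorem chart_coordinate_smallness_general
    (n p d : ℕ) (a : Fin (p + 1) → ℂ) (δ : Fin (p + 1) → ℝ)
    (α : Fin (p + 1) → Fin (n + 1) → ℕ)
    (ha0 : a 0 = 1) (hδ0 : δ 0 = 0)
    (hdeg : ∀ i, ∑ j, α i j = d)
    (δmin : ℝ) (hδmin : ∀ i, i ≠ 0 → δmin ≤ δ i)
    (σ σ₁ : ℝ) (hσ : 0 ≤ σ) (hσσ₁ : σ < σ₁) (hσ₁ : σ₁ < δmin / d)
    (k : Fin (n + 1)) :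
    ∃ t₀ : ℝ, 0 < t₀ ∧ t₀ ≤ 1 ∧ ∀ t : ℝ, 0 < t → t < t₀ →
      ∀ Z : Fin (n + 1) → ℂ,
        (∀ j, (1 / 2) * ‖Z j‖ < ‖Z k‖) →
        (∑ i, a i * ((t ^ δ i : ℝ) : ℂ) * ∏ j, Z j ^ α i j) = 0 →
        (‖∏ j, Z j ^ α 0 j‖
            ≤ 2 ^ d * (∑ i ∈ univ.erase 0, ‖a i‖) * t ^ δmin
                * ‖Z k‖ ^ d) ∧
        ((∀ l, l ≠ k → 0 < α 0 l →
            t ^ σ₁ * ‖Z k‖ ≤ ‖Z l‖) →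
          t ^ (σ₁ * d) * ‖Z k‖ ^ d
            ≤ ‖∏ j, Z j ^ α 0 j‖) ∧
        (∃ l, l ≠ k ∧ ‖Z l‖ < t ^ σ₁ * ‖Z k‖) := by
  have hσ₁_nonneg : 0 ≤ σ₁ := hσ.trans hσσ₁.le
  have hd : (0 : ℝ) < d := by
    rcases d.eq_zero_or_pos with rfl | h
    · simp at hσ₁; linarith
    · exact_mod_cast h
  have he : 0 < δmin - σ₁ * d := by linarith [(lt_div_iff₀ hd).mp hσ₁]
  obtain ⟨ε, hε, hsmall⟩ :=
    exists_pos_forall_mul_rpow_lt_one (2 ^ d * ∑ i ∈ univ.erase 0, ‖a i‖) he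
  refine ⟨min 1 ε, lt_min one_pos hε, min_le_left _ _, fun t ht htt₀ Z hU hF => ?_⟩
  have ht1 : t ≤ 1 := htt₀.le.trans (min_le_left _ _)
  have hZk : 0 < ‖Z k‖ := by linarith [hU k, norm_nonneg (Z k)]
  have hupper : ‖∏ j, Z j ^ α 0 j‖
      ≤ 2 ^ d * (∑ i ∈ univ.erase 0, ‖a i‖) * t ^ δmin * ‖Z k‖ ^ d :=
    (norm_leading_monomial_le a δ α ha0 hδ0 hdeg hδmin ht ht1 (R := 2 * ‖Z k‖)
      (fun j => by linarith [hU j]) hF).trans_eq (by rw [mul_pow]; ring)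
  have hlower : (∀ l, l ≠ k → 0 < α 0 l → t ^ σ₁ * ‖Z k‖ ≤ ‖Z l‖) →
      t ^ (σ₁ * d) * ‖Z k‖ ^ d ≤ ‖∏ j, Z j ^ α 0 j‖ := fun hl => by
    rw [Real.rpow_mul_natCast ht.le, ← mul_pow, ← hdeg 0]
    refine pow_sum_le_norm_prod_pow _ _ (by positivity) fun j hj => ?_
    rcases eq_or_ne j k with rfl | hjk
    · exact mul_le_of_le_one_left hZk.le (Real.rpow_le_one ht.le ht1 hσ₁_nonneg)
    · exact hl j hjk hj
  refine ⟨hupper, hlower, ?_⟩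
  by_contra! hbig
  refine (hlower fun l hlk _ => hbig l hlk).not_gt (hupper.trans_lt ?_)
  exact mul_rpow_mul_lt_rpow_mul ht (by positivity)
    (hsmall t ht (htt₀.trans_le (min_le_right _ _)))

/-- on the chart `U_k` and on the hypersurface `F_t = 0`, the leading
monomial satisfies `|Z^{α^0}| ≤ 2^d Σ_{i≥1}|a_i| |t|^{min_{i≥1} δ_i} |Z_k|^d`; if
moreover `|Z_l/Z_k| ≥ |t|^{σ₁}` for every `l ≠ k` with `α^0_l > 0` then
`|Z^{α^0}| ≥ |t|^{σ₁ d} |Z_k|^d`; hence for `t` small there is `l ≠ k` with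
`|Z_l/Z_k| < |t|^{σ₁}`. -/
theorem chart_coordinate_smallness
    (n p d : ℕ) (a : Fin (p + 1) → ℂ) (δ : Fin (p + 1) → ℝ)
    (α : Fin (p + 1) → Fin (n + 1) → ℕ)
    (ha : ∀ i, a i ≠ 0) (ha0 : a 0 = 1) (hδ0 : δ 0 = 0)
    (hdeg : ∀ i, ∑ j, α i j = d)
    (δmin : ℝ) (hδminpos : 0 < δmin) (hδmin : ∀ i, i ≠ 0 → δmin ≤ δ i)
    (σ σ₁ : ℝ) (hσ : 0 ≤ σ) (hσσ₁ : σ < σ₁) (hσ₁ : σ₁ < δmin / d)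
    (k : Fin (n + 1)) :
    ∃ t₀ : ℝ, 0 < t₀ ∧ t₀ ≤ 1 ∧ ∀ t : ℝ, 0 < t → t < t₀ →
      ∀ Z : Fin (n + 1) → ℂ,
        (∀ j, (1 / 2) * ‖Z j‖ < ‖Z k‖) →
        (∑ i, a i * ((t ^ δ i : ℝ) : ℂ) * ∏ j, Z j ^ α i j) = 0 →
        (‖∏ j, Z j ^ α 0 j‖
            ≤ 2 ^ d * (∑ i ∈ univ.erase 0, ‖a i‖) * t ^ δmin
                * ‖Z k‖ ^ d) ∧
        ((∀ l, l ≠ k → 0 < α 0 l →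
            t ^ σ₁ * ‖Z k‖ ≤ ‖Z l‖) →
          t ^ (σ₁ * d) * ‖Z k‖ ^ d
            ≤ ‖∏ j, Z j ^ α 0 j‖) ∧
        (∃ l, l ≠ k ∧ ‖Z l‖ < t ^ σ₁ * ‖Z k‖) :=
  chart_coordinate_smallness_general n p d a δ α ha0 hδ0 hdeg δmin hδmin σ σ₁ hσ hσσ₁ hσ₁ k
end
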